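/- arXiv:2311.08237 — 2 statements merged into one kernel-verified Lean document; each statement's English description precedes it below -/
import Mathlib

section
/- The quadratic Hilbert symbol at 2: for distinct odd primes p and q, the equation p·X² + q·Y² = Z² has a solution (x,y,z) ≠ (0,0,0) with x, y, z ∈ ℚ_2 if and only if p ≡ 1 (mod 4) or q ≡ 1 (mod 4); that is, (p,q)_2 = (−1)^{((p−1)/2)·((q−1)/2)}. -/
/-!
If `p ≡ 1 (mod 4)`, then `p` or `p + 4q` is `≡ 1 (mod 8)`, hence a square in `ℚ_2` by Hensel's
lemma, which gives the point `(1, 0, √p)` or `(1, 2, √(p + 4q))`. If `p ≡ q ≡ 3 (mod 4)`, a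
nontrivial point can be scaled to a primitive one in `ℤ_2`; modulo 4 the equation reads
`X² + Y² + Z² ≡ 0`, which forces `X, Y, Z` to be even.
-/

open Polynomial

/-- `(a, b)_K = 1`: the conic `a X² + b Y² = Z²` has a `K`-point other than the origin. -/
def HilbertSymbolEqOne {K : Type*} [CommRing K] (a b : K) : Prop :=
  ∃ x y z : K, (x, y, z) ≠ (0, 0, 0) ∧ a * x ^ 2 + b * y ^ 2 = z ^ 2

theorem HilbertSymbolEqOne.symm {K : Type*} [CommRing K] {a b : K} (h : HilbertSymbolEqOne a b) :
    HilbertSymbolEqOne b a := by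
  obtain ⟨x, y, z, hne, heq⟩ := h
  refine ⟨y, x, z, ?_, by linear_combination heq⟩
  simp only [ne_eq, Prod.mk.injEq] at hne ⊢
  tauto

namespace PadicInt

/-- Hensel's lemma for `X² - a` at `1`: `‖1 - a‖ ≤ ‖8‖ < ‖2‖²`. -/
theorem isSquare_of_eight_dvd_sub_one {a : ℤ_[2]} (h : (8 : ℤ_[2]) ∣ a - 1) : IsSquare a := by
  obtain ⟨k, hk⟩ := h
  have h2 : ‖(2 : ℤ_[2])‖ = 2⁻¹ := by simpa using norm_p (p := 2)
  have hval : (X ^ 2 - C a).eval 1 = -(2 ^ 3 * k) := by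
    simp only [eval_sub, eval_pow, eval_X, eval_C, one_pow]
    linear_combination -hk
  have hderiv : (X ^ 2 - C a).derivative.eval 1 = 2 := by simp [derivative_pow]
  obtain ⟨z, hz, -⟩ := hensels_lemma (F := X ^ 2 - C a) (a := 1) <| by
    rw [coe_aeval_eq_eval, hval, hderiv, norm_neg, norm_mul, norm_pow, h2]
    calc (2 : ℝ)⁻¹ ^ 3 * ‖k‖ ≤ 2⁻¹ ^ 3 * 1 := by gcongr; exact norm_le_one k
      _ < 2⁻¹ ^ 2 := by norm_num
  rw [coe_aeval_eq_eval, eval_sub, eval_pow, eval_X, eval_C, sub_eq_zero] at hz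
  exact ⟨z, by rw [← hz, sq]⟩

theorem isSquare_natCast_of_mod_eight {n : ℕ} (h : n % 8 = 1) : IsSquare (n : ℤ_[2]) := by
  apply isSquare_of_eight_dvd_sub_one
  obtain ⟨k, rfl⟩ : ∃ k, n = 8 * k + 1 := ⟨n / 8, by omega⟩
  exact ⟨k, by push_cast; ring⟩

/-- Scaling by the inverse of a coordinate of maximal norm. -/
theorem exists_primitive_solution_of_hilbertSymbolEqOne {p : ℕ} [Fact p.Prime] {a b : ℤ_[p]}
    (h : HilbertSymbolEqOne (a : ℚ_[p]) b) :
    ∃ X Y Z : ℤ_[p], (IsUnit X ∨ IsUnit Y ∨ IsUnit Z) ∧ a * X ^ 2 + b * Y ^ 2 = Z ^ 2 := by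
  classical
  obtain ⟨x, y, z, hne, heq⟩ := h
  obtain ⟨w, hw, hmax⟩ := ({x, y, z} : Finset ℚ_[p]).exists_max_image norm ⟨x, by simp⟩
  simp only [Finset.mem_insert, Finset.mem_singleton, forall_eq_or_imp, forall_eq] at hw hmax
  have hw0 : w ≠ 0 := by
    rintro rfl
    simp only [norm_zero, norm_le_zero_iff] at hmax
    exact hne (by simp [hmax])
  have hlift (u : ℚ_[p]) (hu : ‖u‖ ≤ ‖w‖) : ∃ U : ℤ_[p], (U : ℚ_[p]) = u / w := by
    refine ⟨⟨u / w, ?_⟩, rfl⟩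
    rw [norm_div, div_le_one (norm_pos_iff.mpr hw0)]
    exact hu
  obtain ⟨X, hX⟩ := hlift x hmax.1
  obtain ⟨Y, hY⟩ := hlift y hmax.2.1
  obtain ⟨Z, hZ⟩ := hlift z hmax.2.2
  refine ⟨X, Y, Z, ?_, ?_⟩
  · simp only [PadicInt.isUnit_iff, norm_def, hX, hY, hZ]
    rcases hw with rfl | rfl | rfl <;> simp [hw0]
  · apply PadicInt.ext
    push_cast
    rw [hX, hY, hZ]
    field_simp
    linear_combination heq

theorem not_isUnit_of_mod_four_eq_three {p q : ℕ} (hp : p % 4 = 3) (hq : q % 4 = 3)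
    {X Y Z : ℤ_[2]} (h : p * X ^ 2 + q * Y ^ 2 = Z ^ 2) : ¬(IsUnit X ∨ IsUnit Y ∨ IsUnit Z) := by
  have hcast {n : ℕ} (hn : n % 4 = 3) : (n : ZMod (2 ^ 2)) = 3 := by
    rw [← ZMod.natCast_mod n (2 ^ 2)]
    norm_num [hn]
  have hmod := congrArg (toZModPow 2) h
  simp only [map_add, map_mul, map_pow, map_natCast, hcast hp, hcast hq] at hmod
  have hZMod : ∀ a b c : ZMod (2 ^ 2), 3 * a ^ 2 + 3 * b ^ 2 = c ^ 2 →
      ¬(IsUnit a ∨ IsUnit b ∨ IsUnit c) := by decide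
  intro hunit
  exact hZMod _ _ _ hmod (by rcases hunit with hu | hu | hu <;> simp [hu.map])

end PadicInt

open PadicInt

theorem hilbertSymbolEqOne_of_mod_four {p q : ℕ} (hp : p % 4 = 1) (hq : q % 2 = 1) :
    HilbertSymbolEqOne (p : ℚ_[2]) q := by
  have hsq {n : ℕ} (hn : n % 8 = 1) : IsSquare (n : ℚ_[2]) := by
    simpa using (isSquare_natCast_of_mod_eight hn).map (Coe.ringHom (p := 2))
  rcases (by omega : p % 8 = 1 ∨ p % 8 = 5) with h | h
  · obtain ⟨z, hz⟩ := hsq h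
    exact ⟨1, 0, z, by simp, by rw [hz]; ring⟩
  · obtain ⟨z, hz⟩ := hsq (n := p + 4 * q) (by omega)
    refine ⟨1, 2, z, by simp, ?_⟩
    push_cast at hz
    linear_combination hz

theorem hilbert_symbol_at_two_general (p q : ℕ) (hp : p.Prime) (hq : q.Prime)
    (hp2 : p ≠ 2) (hq2 : q ≠ 2) :
    (∃ x y z : ℚ_[2], (x, y, z) ≠ (0, 0, 0) ∧
        (p : ℚ_[2]) * x ^ 2 + (q : ℚ_[2]) * y ^ 2 = z ^ 2) ↔
      (p % 4 = 1 ∨ q % 4 = 1) := by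
  have hp_odd : p % 2 = 1 := Nat.odd_iff.mp (hp.odd_of_ne_two hp2)
  have hq_odd : q % 2 = 1 := Nat.odd_iff.mp (hq.odd_of_ne_two hq2)
  change HilbertSymbolEqOne (p : ℚ_[2]) q ↔ _
  constructor
  · intro h
    by_contra! hmod
    obtain ⟨X, Y, Z, hunit, heq⟩ :=
      exists_primitive_solution_of_hilbertSymbolEqOne (a := (p : ℤ_[2])) (b := q) (by simpa using h)
    exact not_isUnit_of_mod_four_eq_three (by omega) (by omega) heq hunit
  · rintro (h | h)
    · exact hilbertSymbolEqOne_of_mod_four h hq_odd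
    · exact (hilbertSymbolEqOne_of_mod_four h hp_odd).symm

/-- **The quadratic Hilbert symbol at 2**: for distinct odd primes `p` and `q`, the equation
`p·X² + q·Y² = Z²` has a nontrivial solution in `ℚ_2` iff `p ≡ 1 (mod 4)` or `q ≡ 1 (mod 4)`;
that is, `(p,q)_2 = (-1)^(((p-1)/2)·((q-1)/2))`. -/
theorem hilbert_symbol_at_two (p q : ℕ) (hp : p.Prime) (hq : q.Prime)
    (hp2 : p ≠ 2) (hq2 : q ≠ 2) (hpq : p ≠ q) :
    (∃ x y z : ℚ_[2], (x, y, z) ≠ (0, 0, 0) ∧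
        (p : ℚ_[2]) * x ^ 2 + (q : ℚ_[2]) * y ^ 2 = z ^ 2) ↔
      (p % 4 = 1 ∨ q % 4 = 1) :=
  hilbert_symbol_at_two_general p q hp hq hp2 hq2
end

section
/- Logarithmic-derivative identity with Bernoulli numbers (Kummer/Coates–Wiles computation): let a, b be rational numbers and work in the ring ℚ⟦z⟧ of formal power series over ℚ. Set S_c := exp(c·z/2) − exp(−c·z/2) for c ∈ ℚ, and let G ∈ ℚ⟦z⟧ be the series whose coefficient of z^{k−1} is (B_k/k!)·(a^k − b^k) for k ≥ 2 and whose other coefficients are 0, where B_k denotes the k-th Bernoulli number. Then S_a′·S_b − S_a·S_b′ = G·S_a·S_b, where ′ denotes the formal derivative; equivalently, the logarithmic derivative of F = S_a/S_b equals Σ_{k ≥ 2 even} (B_k/k!)·(a^k − b^k)·z^{k−1} (the terms with odd k ≥ 3 vanish since B_k = 0 for odd k ≥ 3). -/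
open PowerSeries

noncomputable def Ssin (c : ℚ) : PowerSeries ℚ :=
  rescale (c / 2) (exp ℚ) - rescale (-(c / 2)) (exp ℚ)

noncomputable def bernoulliLogDerivSeries (a b : ℚ) : PowerSeries ℚ :=
  PowerSeries.mk fun n =>
    if n = 0 then 0 else (bernoulli (n + 1) / (n + 1).factorial) * (a ^ (n + 1) - b ^ (n + 1))

/-!
Write `e_c := exp(c·z)`. Then `S_c = e_{-c/2}·(e_c − 1)` and `S_c′ = (c/2)·e_{-c/2}·(e_c + 1)`,
so `z·S_c′ = T(c·z)·S_c` with `T(z) = (z/2)·coth(z/2) = z/(e^z − 1) + z/2`. Hence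
`z·(S_a′·S_b − S_a·S_b′) = (T(a·z) − T(b·z))·S_a·S_b`, and `T(z) = Σ_{k ≠ 1} (B_k/k!)·z^k`
because the `z/2` cancels `B_1 = −1/2`; so `T(a·z) − T(b·z) = z·G`, and `z` can be cancelled.
-/

theorem derivative_rescale {R : Type*} [CommSemiring R] (c : R) (f : R⟦X⟧) :
    d⁄dX R (rescale c f) = C c * rescale c (d⁄dX R f) := by
  ext n
  simp only [coeff_derivative, coeff_rescale, coeff_C_mul, pow_succ]
  ring

theorem rescale_C {R : Type*} [CommSemiring R] (c r : R) : rescale c (C r) = C r := by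
  ext n
  rcases n with _ | n <;> simp [coeff_rescale, coeff_C]

/-- `(z/2)·coth(z/2) = z/(e^z − 1) + z/2`. -/
noncomputable def cothSeries : ℚ⟦X⟧ :=
  bernoulliPowerSeries ℚ + C (1 / 2) * X

theorem cothSeries_mul_exp_sub_one :
    cothSeries * (exp ℚ - 1) = C (1 / 2) * X * (exp ℚ + 1) := by
  have hC : (C (1 / 2) : ℚ⟦X⟧) * 2 = 1 := by
    rw [← map_ofNat C 2, ← map_mul]; norm_num
  rw [cothSeries]
  linear_combination bernoulliPowerSeries_mul_exp_sub_one ℚ - X * hC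

theorem coeff_cothSeries (n : ℕ) :
    coeff n cothSeries = if n = 1 then 0 else bernoulli n / n.factorial := by
  rcases n with _ | _ | n
  · simp [cothSeries, bernoulliPowerSeries]
  · norm_num [cothSeries, bernoulliPowerSeries, bernoulli_one]
  · simp [cothSeries, bernoulliPowerSeries]

theorem Ssin_eq_mul (c : ℚ) :
    Ssin c = rescale (-(c / 2)) (exp ℚ) * rescale c (exp ℚ - 1) := by
  rw [Ssin, map_sub, map_one, mul_sub, mul_one, exp_mul_exp_eq_exp_add]
  ring_nf

theorem derivative_Ssin (c : ℚ) :
    d⁄dX ℚ (Ssin c) = C (c / 2) * (rescale (-(c / 2)) (exp ℚ) * rescale c (exp ℚ + 1)) := by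
  rw [Ssin, map_sub, derivative_rescale, derivative_rescale, derivative_exp, map_add, map_one,
    mul_add, mul_one, exp_mul_exp_eq_exp_add, map_neg]
  ring_nf

theorem X_mul_derivative_Ssin (c : ℚ) :
    X * d⁄dX ℚ (Ssin c) = rescale c cothSeries * Ssin c := by
  have hT := congrArg (rescale c) cothSeries_mul_exp_sub_one
  simp only [map_mul, rescale_X, rescale_C] at hT
  have hC : C (1 / 2) * C c = (C (c / 2) : ℚ⟦X⟧) := by rw [← map_mul, one_div_mul_eq_div]
  rw [derivative_Ssin, Ssin_eq_mul]
  linear_combination -rescale (-(c / 2)) (exp ℚ) * (hT + X * rescale c (exp ℚ + 1) * hC)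

theorem rescale_cothSeries_sub (a b : ℚ) :
    rescale a cothSeries - rescale b cothSeries = X * bernoulliLogDerivSeries a b := by
  ext n
  rw [map_sub, coeff_rescale, coeff_rescale, coeff_cothSeries]
  rcases n with _ | _ | n
  · simp
  · simp [bernoulliLogDerivSeries]
  · simp [bernoulliLogDerivSeries, coeff_succ_X_mul]
    ring

/-- **Logarithmic-derivative identity with Bernoulli numbers** (Kummer/Coates–Wiles):
`S_a′·S_b − S_a·S_b′ = G·S_a·S_b`, i.e. the logarithmic derivative of `F = S_a/S_b` equals
`Σ_{k ≥ 2} (B_k/k!)·(a^k − b^k)·z^(k−1)`. -/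
theorem log_deriv_bernoulli_identity (a b : ℚ) :
    (d⁄dX ℚ) (Ssin a) * Ssin b - Ssin a * (d⁄dX ℚ) (Ssin b)
      = bernoulliLogDerivSeries a b * Ssin a * Ssin b := by
  apply mul_left_cancel₀ (X_ne_zero (R := ℚ))
  calc X * ((d⁄dX ℚ) (Ssin a) * Ssin b - Ssin a * (d⁄dX ℚ) (Ssin b))
      = X * (d⁄dX ℚ) (Ssin a) * Ssin b - Ssin a * (X * (d⁄dX ℚ) (Ssin b)) := by ring
    _ = (rescale a cothSeries - rescale b cothSeries) * Ssin a * Ssin b := by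
      rw [X_mul_derivative_Ssin, X_mul_derivative_Ssin]; ring
    _ = X * (bernoulliLogDerivSeries a b * Ssin a * Ssin b) := by
      rw [rescale_cothSeries_sub]; ring
end
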